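/- In the augmented SAT-to-vertex-cover reduction, if the unit clause l is in F (so edge (l,l') is present), then adding the edge (l', l'') yields a graph having a vertex cover of size n + m − r + 1 if and only if F \ {l} is satisfiable. -/
import Mathlib


abbrev Var := ℕ
abbrev Lit := Var × Bool
abbrev ClauseF := Finset Lit

/-- Nodes of the augmented SAT-to-vertex-cover reduction graph: a variable-gadget node
for each literal `l`, an occurrence node for each occurrence of a literal in a clause,
and two auxiliary nodes `l'` and `l''` for each literal `l`. -/
inductive NodeA
  | lit : Lit → NodeA
  | occ : ClauseF → Lit → NodeA
  | aux1 : Lit → NodeA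
  | aux2 : Lit → NodeA
deriving DecidableEq

/-- `S` is a vertex cover of the augmented reduction graph of the CNF `F` over
variables `V`: variable-gadget edges, clause-clique and occurrence edges for non-unit
clauses, and an edge `l–l'` for each unit clause `l ∈ F`, all have an endpoint in `S`. -/
def IsCoverA (V : Finset Var) (F : Finset ClauseF) (S : Finset NodeA) : Prop :=
  (∀ x ∈ V, NodeA.lit (x, true) ∈ S ∨ NodeA.lit (x, false) ∈ S) ∧
  (∀ γ ∈ F, 1 < γ.card →
    (∀ l ∈ γ, ∀ l' ∈ γ, l ≠ l' → NodeA.occ γ l ∈ S ∨ NodeA.occ γ l' ∈ S) ∧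
    (∀ l ∈ γ, NodeA.occ γ l ∈ S ∨ NodeA.lit l ∈ S)) ∧
  (∀ l : Lit, ({l} : ClauseF) ∈ F → NodeA.lit l ∈ S ∨ NodeA.aux1 l ∈ S)

/-- Satisfiability of a CNF given as a finite set of clauses. -/
def FSat (F : Finset ClauseF) : Prop :=
  ∃ I : Var → Bool, ∀ γ ∈ F, ∃ l ∈ γ, I l.1 = l.2

/-- The "kind" of a node: 0 for literal nodes, 1 for occurrence nodes, 2 for auxiliary. -/
def NodeA.kind : NodeA → ℕ
  | .lit _ => 0
  | .occ _ _ => 1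
  | .aux1 _ => 2
  | .aux2 _ => 2

/-- If the unit clause `l₀` is in `F` (so the edge `(l₀, l₀')` is present), then adding
the edge `(l₀', l₀'')` yields a graph having a vertex cover of size `n + m - r + 1` iff
`F \ {l₀}` is satisfiable. -/
theorem stmt12 (V : Finset Var) (F : Finset ClauseF)
    (hvars : ∀ γ ∈ F, ∀ l ∈ γ, l.1 ∈ V) (l₀ : Lit) (hl₀ : ({l₀} : ClauseF) ∈ F) :
    (∃ S : Finset NodeA, IsCoverA V F S ∧
        (NodeA.aux1 l₀ ∈ S ∨ NodeA.aux2 l₀ ∈ S) ∧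
        S.card = V.card + (∑ γ ∈ F, γ.card) - F.card + 1) ↔
      FSat (F.erase {l₀}) := by
  classical
  constructor
  · rintro ⟨S, ⟨hcv, hcc, hcu⟩, haux, hcard⟩
    -- partition of the cover by node kind
    set SL := S.filter (fun v => v.kind = 0) with hSLdef
    set SO := S.filter (fun v => v.kind = 1) with hSOdef
    set SA := S.filter (fun v => v.kind = 2) with hSAdef
    have hkindmem : ∀ v ∈ S, v ∈ SL ∨ v ∈ SO ∨ v ∈ SA := by
      intro v hv
      simp only [hSLdef, hSOdef, hSAdef, Finset.mem_filter]
      cases v <;> simp [NodeA.kind, hv]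
    have hpart : SL.card + SO.card + SA.card = S.card := by
      have hd1 : Disjoint SL SO := by
        simp only [Finset.disjoint_left, hSLdef, hSOdef, Finset.mem_filter]
        rintro v ⟨_, h0⟩ ⟨_, h1⟩; omega
      have hd2 : Disjoint (SL ∪ SO) SA := by
        simp only [Finset.disjoint_left, hSLdef, hSOdef, hSAdef, Finset.mem_union,
          Finset.mem_filter]
        rintro v (⟨_, h⟩ | ⟨_, h⟩) ⟨_, h'⟩ <;> omega
      have hu : SL ∪ SO ∪ SA = S := by
        apply Finset.Subset.antisymm
        · intro v hv
          simp only [Finset.mem_union, hSLdef, hSOdef, hSAdef, Finset.mem_filter] at hv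
          rcases hv with (⟨h, _⟩ | ⟨h, _⟩) | ⟨h, _⟩ <;> exact h
        · intro v hv
          rcases hkindmem v hv with h | h | h <;> simp [Finset.mem_union, h]
      rw [← hu, Finset.card_union_of_disjoint hd2, Finset.card_union_of_disjoint hd1]
    -- the literal part has at least |V| elements
    set g : Var → NodeA := fun x =>
      if NodeA.lit (x, true) ∈ S then NodeA.lit (x, true) else NodeA.lit (x, false) with hgdef
    have hgform : ∀ x, ∃ b, g x = NodeA.lit (x, b) := by
      intro x; rw [hgdef]; dsimp only; split <;> exact ⟨_, rfl⟩
    have himg : V.image g ⊆ SL := by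
      intro v hv
      obtain ⟨x, hx, rfl⟩ := Finset.mem_image.1 hv
      have hmem : g x ∈ S := by
        rw [hgdef]; dsimp only; split
        · assumption
        · rcases hcv x hx with h | h
          · exact absurd h (by assumption)
          · exact h
      obtain ⟨b, hb⟩ := hgform x
      simp only [hSLdef, Finset.mem_filter]
      exact ⟨hmem, by rw [hb]; rfl⟩
    have hginj : Set.InjOn g ↑V := by
      intro x _ y _ hxy
      obtain ⟨b, hb⟩ := hgform x
      obtain ⟨c, hc⟩ := hgform y
      rw [hb, hc] at hxy
      injection hxy with h
      exact (Prod.mk.injEq _ _ _ _ ▸ h).1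
    have hSLlb : V.card ≤ SL.card := by
      calc V.card = (V.image g).card := (Finset.card_image_of_injOn hginj).symm
        _ ≤ SL.card := Finset.card_le_card himg
    -- the occurrence part
    set T := F.biUnion
      (fun γ => (γ.filter (fun l => NodeA.occ γ l ∈ S)).image (NodeA.occ γ)) with hTdef
    have hTsub : T ⊆ SO := by
      intro v hv
      rw [hTdef] at hv
      obtain ⟨γ, _, hv⟩ := Finset.mem_biUnion.1 hv
      obtain ⟨l, hl, rfl⟩ := Finset.mem_image.1 hv
      simp only [Finset.mem_filter] at hl
      simp only [hSOdef, Finset.mem_filter]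
      exact ⟨hl.2, rfl⟩
    have hTcard : T.card = ∑ γ ∈ F, (γ.filter (fun l => NodeA.occ γ l ∈ S)).card := by
      rw [hTdef, Finset.card_biUnion]
      · exact Finset.sum_congr rfl fun γ _ =>
          Finset.card_image_of_injective _ (fun a b h => by injection h)
      · intro γ _ δ _ hγδ
        simp only [Finset.disjoint_left]
        intro v hv hv'
        obtain ⟨l, _, rfl⟩ := Finset.mem_image.1 hv
        obtain ⟨l', _, h⟩ := Finset.mem_image.1 hv'
        injection h with h1 h2
        exact hγδ h1.symm
    have hflb : ∀ γ ∈ F, γ.card - 1 ≤ (γ.filter (fun l => NodeA.occ γ l ∈ S)).card := by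
      intro γ hγ
      have hC : (γ.filter (fun l => ¬ NodeA.occ γ l ∈ S)).card ≤ 1 := by
        rcases le_or_gt γ.card 1 with h | h
        · exact le_trans (Finset.card_le_card (Finset.filter_subset _ _)) h
        · rw [Finset.card_le_one]
          intro a ha b hb
          by_contra hab
          simp only [Finset.mem_filter] at ha hb
          rcases (hcc γ hγ h).1 a ha.1 b hb.1 hab with h' | h'
          · exact ha.2 h'
          · exact hb.2 h'
      have := Finset.card_filter_add_card_filter_not
        (s := γ) (fun l => NodeA.occ γ l ∈ S)
      omega
    have hSOlb : ∑ γ ∈ F, (γ.card - 1) ≤ SO.card := by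
      calc ∑ γ ∈ F, (γ.card - 1)
          ≤ ∑ γ ∈ F, (γ.filter (fun l => NodeA.occ γ l ∈ S)).card :=
            Finset.sum_le_sum hflb
        _ = T.card := hTcard.symm
        _ ≤ SO.card := Finset.card_le_card hTsub
    -- the auxiliary part
    have hSAlb : 1 ≤ SA.card := by
      rcases haux with h | h
      · exact Finset.card_pos.2 ⟨NodeA.aux1 l₀, Finset.mem_filter.2 ⟨h, rfl⟩⟩
      · exact Finset.card_pos.2 ⟨NodeA.aux2 l₀, Finset.mem_filter.2 ⟨h, rfl⟩⟩
    -- arithmetic identities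
    have hse : ∑ γ ∈ F, γ.card
        = (∑ γ ∈ F, (γ.card - 1)) + (F.filter (fun γ => γ.Nonempty)).card := by
      rw [Finset.card_filter, ← Finset.sum_add_distrib]
      apply Finset.sum_congr rfl
      intro γ _
      rcases γ.eq_empty_or_nonempty with rfl | hne
      · simp
      · have : 1 ≤ γ.card := Finset.card_pos.2 hne
        simp only [hne, if_pos]
        omega
    have hz : F.card ≤ (F.filter (fun γ => γ.Nonempty)).card + 1 := by
      have hsub : F.filter (fun γ => ¬ γ.Nonempty) ⊆ {∅} := by
        intro γ hγ
        simp only [Finset.mem_filter, Finset.not_nonempty_iff_eq_empty] at hγ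
        simp [hγ.2]
      have h1 : (F.filter (fun γ => ¬ γ.Nonempty)).card ≤ 1 := by
        calc _ ≤ ({∅} : Finset ClauseF).card := Finset.card_le_card hsub
          _ = 1 := Finset.card_singleton _
      have := Finset.card_filter_add_card_filter_not
        (s := F) (fun γ => γ.Nonempty)
      omega
    have hn1 : 1 ≤ V.card :=
      Finset.card_pos.2 ⟨l₀.1, hvars _ hl₀ l₀ (Finset.mem_singleton_self l₀)⟩
    have hes : (F.filter (fun γ => γ.Nonempty)).card ≤ ∑ γ ∈ F, γ.card := by omega
    have hfr : (F.filter (fun γ => γ.Nonempty)).card ≤ F.card :=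
      Finset.card_le_card (Finset.filter_subset _ _)
    -- tightness
    have key : SL.card = V.card ∧ SO.card = ∑ γ ∈ F, (γ.card - 1) ∧ SA.card = 1 ∧
        F.card ≤ (F.filter (fun γ => γ.Nonempty)).card := by
      omega
    obtain ⟨hSLeq, hSOeq, hSAeq, her⟩ := key
    have hallne : ∀ γ ∈ F, γ.Nonempty := by
      have hfe : F.filter (fun γ => γ.Nonempty) = F :=
        Finset.eq_of_subset_of_card_le (Finset.filter_subset _ _) her
      intro γ hγ
      rw [← hfe] at hγ
      exact (Finset.mem_filter.1 hγ).2
    -- the interpretation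
    set I : Var → Bool := fun x => decide (NodeA.lit (x, true) ∈ S) with hIdef
    have hSLset : V.image g = SL :=
      Finset.eq_of_subset_of_card_le himg
        (by rw [Finset.card_image_of_injOn hginj]; omega)
    have hIlit : ∀ l : Lit, NodeA.lit l ∈ S → I l.1 = l.2 := by
      intro l hl
      have hlSL : NodeA.lit l ∈ SL := by
        simp only [hSLdef, Finset.mem_filter]; exact ⟨hl, rfl⟩
      rw [← hSLset] at hlSL
      obtain ⟨x, hx, hgx⟩ := Finset.mem_image.1 hlSL
      rw [hgdef] at hgx
      dsimp only at hgx
      split at hgx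
      · injection hgx with h
        rw [← h]
        simp only [hIdef]
        simpa using (by assumption : NodeA.lit (x, true) ∈ S)
      · injection hgx with h
        rw [← h]
        simp only [hIdef]
        simpa using (by assumption : ¬ NodeA.lit (x, true) ∈ S)
    -- every non-unit clause has an occurrence node outside S
    have hocc : ∀ γ ∈ F, 1 < γ.card → ∃ l ∈ γ, NodeA.occ γ l ∉ S := by
      intro γ hγ hγ1
      by_contra hcon
      push_neg at hcon
      have hfull : (γ.filter (fun l => NodeA.occ γ l ∈ S)).card = γ.card := by
        rw [Finset.filter_true_of_mem hcon]
      have hlt : ∑ δ ∈ F, (δ.card - 1)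
          < ∑ δ ∈ F, (δ.filter (fun l => NodeA.occ δ l ∈ S)).card := by
        apply Finset.sum_lt_sum hflb
        exact ⟨γ, hγ, by omega⟩
      have : T.card ≤ SO.card := Finset.card_le_card hTsub
      omega
    -- the only auxiliary node in S corresponds to l₀
    have hauxonly : ∀ l : Lit, NodeA.aux1 l ∈ S → l = l₀ := by
      intro l hl
      obtain ⟨a, ha⟩ := Finset.card_eq_one.1 hSAeq
      have hlSA : NodeA.aux1 l ∈ SA := by
        simp only [hSAdef, Finset.mem_filter]; exact ⟨hl, rfl⟩
      rw [ha, Finset.mem_singleton] at hlSA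
      rcases haux with h | h
      · have : NodeA.aux1 l₀ ∈ SA := by
          simp only [hSAdef, Finset.mem_filter]; exact ⟨h, rfl⟩
        rw [ha, Finset.mem_singleton] at this
        rw [← this] at hlSA
        injection hlSA
      · have : NodeA.aux2 l₀ ∈ SA := by
          simp only [hSAdef, Finset.mem_filter]; exact ⟨h, rfl⟩
        rw [ha, Finset.mem_singleton] at this
        rw [← this] at hlSA
        injection hlSA
    -- conclude
    refine ⟨I, ?_⟩
    intro γ hγ
    obtain ⟨hne, hγF⟩ := Finset.mem_erase.1 hγ
    rcases lt_or_ge 1 γ.card with h | h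
    · obtain ⟨l, hl, hlocc⟩ := hocc γ hγF h
      rcases (hcc γ hγF h).2 l hl with h' | h'
      · exact absurd h' hlocc
      · exact ⟨l, hl, hIlit l h'⟩
    · have h1 : γ.card = 1 :=
        le_antisymm h (Finset.card_pos.2 (hallne γ hγF))
      obtain ⟨l, rfl⟩ := Finset.card_eq_one.1 h1
      rcases hcu l hγF with h' | h'
      · exact ⟨l, Finset.mem_singleton_self l, hIlit l h'⟩
      · exact absurd (hauxonly l h') (fun hh => hne (by rw [hh]))
  · rintro ⟨I, hI⟩
    -- no clause of F is empty
    have hnoempty : ∀ γ ∈ F, γ.Nonempty := by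
      intro γ hγ
      rcases γ.eq_empty_or_nonempty with rfl | hne
      · obtain ⟨l, hl, -⟩ := hI ∅
          (Finset.mem_erase.2 ⟨(Finset.singleton_ne_empty l₀).symm, hγ⟩)
        exact absurd hl (Finset.notMem_empty l)
      · exact hne
    -- a satisfied literal in every clause of F \ {l₀}
    have hwit : ∀ γ : ClauseF, ∃ l : Lit, γ ∈ F.erase {l₀} → l ∈ γ ∧ I l.1 = l.2 := by
      intro γ
      by_cases h : γ ∈ F.erase {l₀}
      · obtain ⟨l, hl, hIl⟩ := hI γ h
        exact ⟨l, fun _ => ⟨hl, hIl⟩⟩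
      · exact ⟨(0, false), fun h' => absurd h' h⟩
    choose w hw using hwit
    set A := V.image (fun x => NodeA.lit (x, I x)) with hAdef
    set B := (F.erase {l₀}).biUnion
      (fun γ => (γ.erase (w γ)).image (NodeA.occ γ)) with hBdef
    refine ⟨A ∪ B ∪ {NodeA.aux1 l₀}, ⟨?_, ?_, ?_⟩, ?_, ?_⟩
    · -- variable edges
      intro x hx
      have hmem : NodeA.lit (x, I x) ∈ A ∪ B ∪ {NodeA.aux1 l₀} :=
        Finset.mem_union_left _ (Finset.mem_union_left _
          (Finset.mem_image_of_mem _ hx))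
      cases hIx : I x
      · right; rwa [hIx] at hmem
      · left; rwa [hIx] at hmem
    · -- clause cliques and occurrence edges
      intro γ hγ hγ1
      have hγe : γ ∈ F.erase {l₀} := by
        refine Finset.mem_erase.2 ⟨?_, hγ⟩
        intro hh
        rw [hh, Finset.card_singleton] at hγ1
        omega
      have hwγ := hw γ hγe
      have hBmem : ∀ l ∈ γ, l ≠ w γ → NodeA.occ γ l ∈ A ∪ B ∪ {NodeA.aux1 l₀} := by
        intro l hl hlw
        refine Finset.mem_union_left _ (Finset.mem_union_right _ ?_)
        rw [hBdef]
        exact Finset.mem_biUnion.2 ⟨γ, hγe,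
          Finset.mem_image_of_mem _ (Finset.mem_erase.2 ⟨hlw, hl⟩)⟩
      constructor
      · intro l hl l' hl' hll'
        by_cases h : l = w γ
        · right; exact hBmem l' hl' (by rw [← h]; exact (Ne.symm hll'))
        · left; exact hBmem l hl h
      · intro l hl
        by_cases h : l = w γ
        · right
          have hxV : l.1 ∈ V := hvars γ hγ l hl
          have hmem : NodeA.lit (l.1, I l.1) ∈ A ∪ B ∪ {NodeA.aux1 l₀} :=
            Finset.mem_union_left _ (Finset.mem_union_left _
              (Finset.mem_image_of_mem _ hxV))
          have hIl : I l.1 = l.2 := by rw [h]; exact hwγ.2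
          have hform : (l.1, I l.1) = l := by rw [hIl]
          rwa [hform] at hmem
        · left; exact hBmem l hl h
    · -- unit clause edges
      intro l hlF
      by_cases h : l = l₀
      · right
        subst h
        exact Finset.mem_union_right _ (Finset.mem_singleton_self _)
      · left
        have hle : ({l} : ClauseF) ∈ F.erase {l₀} := by
          refine Finset.mem_erase.2 ⟨?_, hlF⟩
          intro hh
          exact h (Finset.singleton_injective hh)
        have hwl := hw _ hle
        have hwl1 : w {l} = l := Finset.mem_singleton.1 hwl.1
        have hIl : I l.1 = l.2 := by rw [← hwl1]; exact hwl.2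
        have hxV : l.1 ∈ V := hvars _ hlF l (Finset.mem_singleton_self l)
        have : NodeA.lit (l.1, I l.1) ∈ A ∪ B ∪ {NodeA.aux1 l₀} :=
          Finset.mem_union_left _ (Finset.mem_union_left _
            (Finset.mem_image_of_mem _ hxV))
        have hform : (l.1, I l.1) = l := by rw [hIl]
        rwa [hform] at this
    · -- the new edge's endpoint
      exact Or.inl (Finset.mem_union_right _ (Finset.mem_singleton_self _))
    · -- cardinality
      have hdAB : Disjoint A B := by
        simp only [Finset.disjoint_left, hAdef, hBdef]
        intro v hv hv'
        obtain ⟨x, -, rfl⟩ := Finset.mem_image.1 hv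
        obtain ⟨γ, -, hv'⟩ := Finset.mem_biUnion.1 hv'
        obtain ⟨l, -, h⟩ := Finset.mem_image.1 hv'
        injection h
      have hdAB2 : Disjoint (A ∪ B) ({NodeA.aux1 l₀} : Finset NodeA) := by
        simp only [Finset.disjoint_right, Finset.mem_singleton, Finset.mem_union,
          hAdef, hBdef]
        rintro v rfl hv
        rcases hv with hv | hv
        · obtain ⟨x, -, h⟩ := Finset.mem_image.1 hv
          injection h
        · obtain ⟨γ, -, hv⟩ := Finset.mem_biUnion.1 hv
          obtain ⟨l, -, h⟩ := Finset.mem_image.1 hv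
          injection h
      have hAcard : A.card = V.card := by
        rw [hAdef]
        apply Finset.card_image_of_injOn
        intro x _ y _ h
        injection h with h
        exact (Prod.mk.injEq _ _ _ _ ▸ h).1
      have hBcard : B.card = ∑ γ ∈ F.erase {l₀}, (γ.card - 1) := by
        rw [hBdef, Finset.card_biUnion]
        · apply Finset.sum_congr rfl
          intro γ hγ
          rw [Finset.card_image_of_injective _ (fun a b h => by injection h),
            Finset.card_erase_of_mem (hw γ hγ).1]
        · intro γ _ δ _ hγδ
          simp only [Finset.disjoint_left]
          intro v hv hv'
          obtain ⟨l, -, rfl⟩ := Finset.mem_image.1 hv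
          obtain ⟨l', -, h⟩ := Finset.mem_image.1 hv'
          injection h with h1 h2
          exact hγδ h1.symm
      have htotal : (A ∪ B ∪ {NodeA.aux1 l₀}).card
          = V.card + (∑ γ ∈ F.erase {l₀}, (γ.card - 1)) + 1 := by
        rw [Finset.card_union_of_disjoint hdAB2, Finset.card_union_of_disjoint hdAB,
          hAcard, hBcard, Finset.card_singleton]
      -- arithmetic
      have hs1 : ∑ γ ∈ F.erase {l₀}, γ.card + ({l₀} : ClauseF).card
          = ∑ γ ∈ F, γ.card := Finset.sum_erase_add F _ hl₀
      rw [Finset.card_singleton] at hs1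
      have hr1 : (F.erase {l₀}).card = F.card - 1 := Finset.card_erase_of_mem hl₀
      have hr2 : 1 ≤ F.card := Finset.card_pos.2 ⟨_, hl₀⟩
      have hs2 : ∑ γ ∈ F.erase {l₀}, γ.card
          = (∑ γ ∈ F.erase {l₀}, (γ.card - 1)) + (F.erase {l₀}).card := by
        rw [Finset.card_eq_sum_ones (F.erase {l₀}), ← Finset.sum_add_distrib]
        apply Finset.sum_congr rfl
        intro γ hγ
        have : 1 ≤ γ.card :=
          Finset.card_pos.2 (hnoempty γ (Finset.mem_of_mem_erase hγ))
        omega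
      omega
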